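/- arXiv:2411.15308 — 2 statements merged into one kernel-verified Lean document; each statement's English description precedes it below -/
import Mathlib

section
/- Let f : ℝⁿ → [0,∞) be a nonnegative measurable function. Suppose that for almost every τ > 0 the superlevel set {f > τ} is a ball, in the sense that there exists an open ball B_τ with B_τ ⊆ {f > τ} ⊆ closure(B_τ). Then for every τ > 0 with |{f > τ}| < ∞, the set {f > τ} contains an open ball of the same Lebesgue measure as {f > τ}. -/
open MeasureTheory Real Metric Filter Topology Module

lemma aux_ball_subset {E : Type*} [NormedAddCommGroup E] [NormedSpace ℝ E] [Nontrivial E]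
    {c c' : E} {r r' : ℝ} (hr : 0 < r) (h : ball c r ⊆ closedBall c' r') :
    dist c c' + r ≤ r' := by
  have hc : dist c c' ≤ r' := h (mem_ball_self hr)
  refine le_of_forall_pos_le_add fun ε hε => ?_
  rcases le_or_gt r ε with hre | hre
  · linarith
  rcases eq_or_ne c c' with rfl | hne
  · obtain ⟨u, hu⟩ := exists_norm_eq E (le_of_lt (by linarith : (0:ℝ) < r - ε))
    have hx : c + u ∈ ball c r := by
      simp [mem_ball, dist_eq_norm, hu]; linarith
    have := h hx
    simp [mem_closedBall, dist_eq_norm, hu] at this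
    simp only [dist_self]
    linarith
  · set d := c - c' with hd
    have hdn : ‖d‖ ≠ 0 := by
      simpa [hd, sub_eq_zero] using hne
    have hdn' : 0 < ‖d‖ := lt_of_le_of_ne (norm_nonneg _) (Ne.symm hdn)
    have hrε : (0:ℝ) ≤ (r - ε)/‖d‖ := div_nonneg (by linarith) (norm_nonneg _)
    set x := c + ((r - ε)/‖d‖) • d with hx
    have hx1 : x ∈ ball c r := by
      simp only [hx, mem_ball, dist_eq_norm, add_sub_cancel_left, norm_smul,
        Real.norm_eq_abs, abs_of_nonneg hrε]
      rw [div_mul_cancel₀ _ hdn]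
      linarith
    have hx2 := h hx1
    have hxd : dist x c' = ‖d‖ + (r - ε) := by
      have h1 : x - c' = (1 + (r - ε)/‖d‖) • d := by
        simp only [hx, hd]; module
      rw [dist_eq_norm, h1, norm_smul, Real.norm_eq_abs,
        abs_of_nonneg (by linarith : (0:ℝ) ≤ 1 + (r-ε)/‖d‖)]
      field_simp
    rw [mem_closedBall, hxd] at hx2
    have hdd : dist c c' = ‖d‖ := by rw [dist_eq_norm]
    linarith

theorem stmt_15 (n : ℕ) (f : EuclideanSpace ℝ (Fin n) → ℝ) (hf : Measurable f)
    (hf0 : ∀ x, 0 ≤ f x)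
    (hball : ∀ᵐ τ ∂(volume.restrict (Set.Ioi (0 : ℝ))),
      ∃ (c : EuclideanSpace ℝ (Fin n)) (r : ℝ),
        Metric.ball c r ⊆ {x | τ < f x} ∧ {x | τ < f x} ⊆ closure (Metric.ball c r)) :
    ∀ τ : ℝ, 0 < τ → volume {x | τ < f x} < ⊤ →
      ∃ (c : EuclideanSpace ℝ (Fin n)) (r : ℝ),
        Metric.ball c r ⊆ {x | τ < f x} ∧
        volume (Metric.ball c r) = volume {x | τ < f x} := by
  intro τ hτ hV
  set V := volume {x | τ < f x} with hVdef
  rcases eq_or_ne V 0 with h0 | h0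
  · exact ⟨0, 0, by simp, by simp [← hVdef, h0]⟩
  rcases Nat.eq_zero_or_pos n with rfl | hn
  · -- zero-dimensional case
    haveI : Subsingleton (EuclideanSpace ℝ (Fin 0)) := ⟨fun a b => PiLp.ext fun i => i.elim0⟩
    have hne : {x : EuclideanSpace ℝ (Fin 0) | τ < f x}.Nonempty := nonempty_of_measure_ne_zero h0
    have huniv : {x : EuclideanSpace ℝ (Fin 0) | τ < f x} = Set.univ := by
      obtain ⟨a, ha⟩ := hne
      ext b
      simp only [Set.mem_setOf_eq, Set.mem_univ, iff_true]
      rwa [Subsingleton.elim b a]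
    have hball1 : ball (0 : EuclideanSpace ℝ (Fin 0)) 1 = Set.univ := by
      ext b
      simp [Subsingleton.elim b (0 : EuclideanSpace ℝ (Fin 0))]
    exact ⟨0, 1, by rw [hball1, huniv], by rw [hball1, hVdef, huniv]⟩
  -- main case : n ≥ 1
  haveI : Nonempty (Fin n) := ⟨⟨0, hn⟩⟩
  haveI : Nontrivial (EuclideanSpace ℝ (Fin n)) := inferInstance
  set P : ℝ → Prop := fun σ => ∃ (c : EuclideanSpace ℝ (Fin n)) (r : ℝ),
      ball c r ⊆ {x | σ < f x} ∧ {x | σ < f x} ⊆ closure (ball c r) with hP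
  have hbad : volume ({σ | ¬ P σ} ∩ Set.Ioi (0:ℝ)) = 0 := by
    rw [ae_iff, Measure.restrict_apply' measurableSet_Ioi] at hball
    exact hball
  have hgood : ∀ a b : ℝ, 0 < a → a < b → ∃ s, s ∈ Set.Ioo a b ∧ P s := by
    intro a b ha hab
    by_contra hcon
    push_neg at hcon
    have hsub : Set.Ioo a b ⊆ {σ | ¬ P σ} ∩ Set.Ioi 0 := fun s hs =>
      ⟨hcon s hs, lt_trans ha hs.1⟩
    have hle := measure_mono (μ := volume) hsub
    rw [hbad, Real.volume_Ioo] at hle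
    simp only [nonpos_iff_eq_zero, ENNReal.ofReal_eq_zero] at hle
    linarith
  have hex : ∀ k : ℕ, ∃ s, s ∈ Set.Ioo (τ + 1/((k:ℝ)+2)) (τ + 1/((k:ℝ)+1)) ∧ P s := by
    intro k
    have hp : (0:ℝ) < 1/((k:ℝ)+2) := by positivity
    refine hgood _ _ (by linarith) ?_
    have : 1/((k:ℝ)+2) < 1/((k:ℝ)+1) :=
      one_div_lt_one_div_of_lt (by positivity) (by linarith)
    linarith
  choose σ hσmem hσP using hex
  have hστ : ∀ k, τ < σ k := by
    intro k
    have hp : (0:ℝ) < 1/((k:ℝ)+2) := by positivity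
    exact lt_trans (by linarith) (hσmem k).1
  have hσanti : ∀ k m : ℕ, k ≤ m → σ m ≤ σ k := by
    intro k m hkm
    rcases eq_or_lt_of_le hkm with rfl | h
    · exact le_refl _
    · have h1 : σ m < τ + 1/((m:ℝ)+1) := (hσmem m).2
      have h2 : τ + 1/((k:ℝ)+2) < σ k := (hσmem k).1
      have h3 : 1/((m:ℝ)+1) ≤ 1/((k:ℝ)+2) := by
        apply one_div_le_one_div_of_le (by positivity)
        have : (k:ℝ) + 1 ≤ m := by exact_mod_cast h
        linarith
      linarith
  set A : ℕ → Set (EuclideanSpace ℝ (Fin n)) := fun k => {x | σ k < f x} with hA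
  have hmono : Monotone A := fun k m hkm x hx =>
    lt_of_le_of_lt (hσanti k m hkm) hx
  have hAsub : ∀ k, A k ⊆ {x | τ < f x} := fun k x hx => lt_trans (hστ k) hx
  have hU : ⋃ k, A k = {x | τ < f x} := by
    ext x
    simp only [Set.mem_iUnion, hA, Set.mem_setOf_eq]
    constructor
    · rintro ⟨k, hk⟩; exact lt_trans (hστ k) hk
    · intro hx
      obtain ⟨N, hN⟩ := exists_nat_gt (1/(f x - τ))
      have hN0 : (0:ℝ) < 1/(f x - τ) := by
        have : 0 < f x - τ := by linarith
        positivity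
      have hN1 : 1/((N:ℝ)+1) < f x - τ := by
        rw [div_lt_iff₀ (by positivity)]
        rw [div_lt_iff₀ (by linarith)] at hN
        nlinarith
      refine ⟨N, ?_⟩
      have := (hσmem N).2
      linarith
  obtain ⟨c, r, hc1, hc2⟩ : ∃ (c : ℕ → EuclideanSpace ℝ (Fin n)) (r : ℕ → ℝ),
      (∀ k, ball (c k) (r k) ⊆ A k) ∧ (∀ k, A k ⊆ closure (ball (c k) (r k))) := by
    choose c r h1 h2 using fun k => hσP k
    exact ⟨c, r, h1, h2⟩
  have hAvol : ∀ k, volume (A k) = volume (ball (c k) (r k)) := by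
    intro k
    rcases le_or_gt (r k) 0 with hr | hr
    · have hb : ball (c k) (r k) = ∅ := ball_eq_empty.2 hr
      have := hc2 k
      rw [hb] at this ⊢
      simp only [closure_empty, Set.subset_empty_iff] at this
      rw [this]
    · refine le_antisymm ?_ (measure_mono (hc1 k))
      calc volume (A k) ≤ volume (closure (ball (c k) (r k))) := measure_mono (hc2 k)
        _ = volume (closedBall (c k) (r k)) := by rw [closure_ball _ (ne_of_gt hr)]
        _ = volume (ball (c k) (r k)) :=
            Measure.addHaar_closedBall_eq_addHaar_ball _ _ _
  have htend : Tendsto (fun k => volume (A k)) atTop (𝓝 V) := by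
    rw [hVdef, ← hU]
    exact tendsto_measure_iUnion_atTop hmono
  -- find K with positive measure
  obtain ⟨K, hK⟩ : ∃ K, volume (A K) ≠ 0 := by
    by_contra hcon
    push_neg at hcon
    have : volume (⋃ k, A k) = 0 := measure_iUnion_null hcon
    rw [hU] at this
    exact h0 this
  have hApos : ∀ k, volume (A (k + K)) ≠ 0 := by
    intro k hz
    exact hK (le_antisymm (hz ▸ measure_mono (hmono (Nat.le_add_left K k))) (zero_le))
  have hrpos : ∀ k, 0 < r (k + K) := by
    intro k
    have hne : volume (ball (c (k+K)) (r (k+K))) ≠ 0 := by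
      rw [← hAvol]; exact hApos k
    exact nonempty_ball.1 (nonempty_of_measure_ne_zero hne)
  -- key inequality
  have hkey : ∀ k m : ℕ, k ≤ m → dist (c (k+K)) (c (m+K)) + r (k+K) ≤ r (m+K) := by
    intro k m hkm
    apply aux_ball_subset (hrpos k)
    calc ball (c (k+K)) (r (k+K)) ⊆ A (k+K) := hc1 _
      _ ⊆ A (m+K) := hmono (by omega)
      _ ⊆ closure (ball (c (m+K)) (r (m+K))) := hc2 _
      _ = closedBall (c (m+K)) (r (m+K)) := closure_ball _ (ne_of_gt (hrpos m))
  have hrmono : Monotone (fun k => r (k + K)) := by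
    intro k m hkm
    have := hkey k m hkm
    have := dist_nonneg (x := c (k+K)) (y := c (m+K))
    dsimp only
    linarith
  -- boundedness of radii
  set κ := volume (ball (0 : EuclideanSpace ℝ (Fin n)) 1) with hκ
  have hκ0 : κ ≠ 0 := (measure_ball_pos volume 0 one_pos).ne'
  have hκt : κ ≠ ⊤ := measure_ball_lt_top.ne
  have hrbdd : ∀ k, r (k + K) ≤ max ((V / κ).toReal) 1 := by
    intro k
    have hb : volume (ball (c (k+K)) (r (k+K))) ≤ V := by
      rw [hVdef]
      exact measure_mono ((hc1 _).trans (hAsub _))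
    rw [Measure.addHaar_ball volume _ (hrpos k).le] at hb
    have hfr : finrank ℝ (EuclideanSpace ℝ (Fin n)) = n := finrank_euclideanSpace_fin
    rw [hfr] at hb
    have hdiv : ENNReal.ofReal (r (k+K) ^ n) ≤ V / κ := by
      rw [ENNReal.le_div_iff_mul_le (Or.inl hκ0) (Or.inl hκt)]
      exact hb
    have hVκt : V / κ ≠ ⊤ := by
      intro ht
      rw [ENNReal.div_eq_top] at ht
      rcases ht with ⟨_, h⟩ | ⟨h, _⟩
      · exact hκ0 h
      · exact hV.ne h
    have hrn : r (k+K) ^ n ≤ (V / κ).toReal :=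
      (ENNReal.ofReal_le_iff_le_toReal hVκt).1 hdiv
    rcases le_or_gt (r (k+K)) 1 with h1 | h1
    · exact le_max_of_le_right h1
    · refine le_max_of_le_left ?_
      calc r (k+K) ≤ r (k+K) ^ n := le_self_pow₀ h1.le (by omega)
        _ ≤ (V / κ).toReal := hrn
  set R := ⨆ k, r (k + K) with hR
  have hbdd : BddAbove (Set.range fun k => r (k + K)) :=
    ⟨max ((V / κ).toReal) 1, by rintro x ⟨k, rfl⟩; exact hrbdd k⟩
  have hrR : ∀ k, r (k + K) ≤ R := fun k => le_ciSup hbdd k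
  have htendr : Tendsto (fun k => r (k + K)) atTop (𝓝 R) :=
    tendsto_atTop_ciSup hrmono hbdd
  -- Cauchy sequence of centers
  have hcauchy : CauchySeq (fun k => c (k + K)) := by
    apply cauchySeq_of_le_tendsto_0 (b := fun N => R - r (N + K))
    · intro m l N hm hl
      rcases le_total m l with h | h
      · have := hkey m l h
        have h2 := hrR l
        have h3 := hrmono hm
        dsimp only at h3 ⊢
        linarith
      · rw [dist_comm]
        have := hkey l m h
        have h2 := hrR m
        have h3 := hrmono hl
        dsimp only at h3 ⊢
        linarith
    · have : Tendsto (fun N => R - r (N + K)) atTop (𝓝 (R - R)) :=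
        tendsto_const_nhds.sub htendr
      simpa using this
  obtain ⟨climit, hclimit⟩ := cauchySeq_tendsto_of_complete hcauchy
  have hcc : ∀ k, dist climit (c (k + K)) ≤ R - r (k + K) := by
    intro k
    have hlim : Tendsto (fun m => dist (c (m + K)) (c (k + K))) atTop
        (𝓝 (dist climit (c (k + K)))) := (hclimit.dist tendsto_const_nhds)
    refine le_of_tendsto hlim ?_
    filter_upwards [eventually_ge_atTop k] with m hm
    have := hkey k m hm
    have := hrR m
    have := dist_nonneg (x := c (k+K)) (y := c (m+K))
    rw [dist_comm]
    linarith
  -- the limit ball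
  refine ⟨climit, R, ?_, ?_⟩
  · intro x hx
    rw [mem_ball] at hx
    have h1 : (dist x climit + R) / 2 < R := by linarith
    obtain ⟨k, hk⟩ := (htendr.eventually (eventually_gt_nhds h1)).exists
    have hxk : x ∈ ball (c (k + K)) (r (k + K)) := by
      rw [mem_ball]
      calc dist x (c (k+K)) ≤ dist x climit + dist climit (c (k+K)) := dist_triangle _ _ _
        _ ≤ dist x climit + (R - r (k+K)) := by linarith [hcc k]
        _ < r (k+K) := by linarith
    exact hAsub _ (hc1 _ hxk)
  · have hsub2 : ∀ k, ball (c (k+K)) (r (k+K)) ⊆ ball climit R := by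
      intro k x hx
      rw [mem_ball] at hx ⊢
      calc dist x climit ≤ dist x (c (k+K)) + dist (c (k+K)) climit := dist_triangle _ _ _
        _ < r (k+K) + (R - r (k+K)) := by
            rw [dist_comm (c (k+K))]
            linarith [hcc k]
        _ = R := by ring
    refine le_antisymm ?_ ?_
    · apply measure_mono
      intro x hx
      rw [mem_ball] at hx
      have h1 : (dist x climit + R) / 2 < R := by linarith
      obtain ⟨k, hk⟩ := (htendr.eventually (eventually_gt_nhds h1)).exists
      have hxk : x ∈ ball (c (k + K)) (r (k + K)) := by
        rw [mem_ball]
        calc dist x (c (k+K)) ≤ dist x climit + dist climit (c (k+K)) := dist_triangle _ _ _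
          _ ≤ dist x climit + (R - r (k+K)) := by linarith [hcc k]
          _ < r (k+K) := by linarith
      exact hAsub _ (hc1 _ hxk)
    · have htend' : Tendsto (fun k => volume (A (k + K))) atTop (𝓝 V) :=
        htend.comp (tendsto_add_atTop_nat K)
      refine le_of_tendsto htend' ?_
      filter_upwards with k
      rw [hAvol]
      exact measure_mono (hsub2 k)
end

section
/- Let n ≥ 1, 0 < s < 1, and let u : ℝⁿ → ℝ be a measurable function which is 2π-periodic in the variable x₁. Then the periodic fractional coarea formula holds: [u]^{per}_{W^{s,1}} = 2 ∫_{−∞}^{+∞} P_s({u > t}) dt, where both sides may be +∞. -/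
open MeasureTheory Real
open scoped ENNReal

/-- `([u]^{per}_{W^{s,p}})^p`, the `p`-th power of the periodic Gagliardo seminorm on
`ℝⁿ = ℝ × ℝ^{n−1}` (so `n = m + 1`), for a function which is `2π`-periodic in the first
variable. -/
noncomputable def gagP (m : ℕ) (s p : ℝ) (u : ℝ × EuclideanSpace ℝ (Fin m) → ℝ) : ℝ≥0∞ :=
  ∫⁻ x in {x : ℝ × EuclideanSpace ℝ (Fin m) | x.1 ∈ Set.Ioo (-π) π},
    ∫⁻ y : ℝ × EuclideanSpace ℝ (Fin m),
      ENNReal.ofReal (|u x - u y| ^ p /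
        Real.sqrt ((x.1 - y.1) ^ 2 + ‖x.2 - y.2‖ ^ 2) ^ ((m : ℝ) + 1 + s * p))

/-- The periodic Gagliardo seminorm `[u]^{per}_{W^{s,p}}`. -/
noncomputable def gagSeminorm (m : ℕ) (s p : ℝ) (u : ℝ × EuclideanSpace ℝ (Fin m) → ℝ) :
    ℝ≥0∞ :=
  gagP m s p u ^ (1 / p)
/-- The periodic fractional perimeter
`P_s(E) := ∫_{E ∩ {−π<x₁<π}} dx ∫_{ℝⁿ\E} dy |x−y|^{−(n+s)}` on `ℝⁿ = ℝ × ℝ^{n−1}`. -/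
noncomputable def perPerim (m : ℕ) (s : ℝ) (A : Set (ℝ × EuclideanSpace ℝ (Fin m))) :
    ℝ≥0∞ :=
  ∫⁻ x in A ∩ {x : ℝ × EuclideanSpace ℝ (Fin m) | x.1 ∈ Set.Ioo (-π) π}, ∫⁻ y in Aᶜ,
    ENNReal.ofReal
      (1 / Real.sqrt ((x.1 - y.1) ^ 2 + ‖x.2 - y.2‖ ^ 2) ^ ((m : ℝ) + 1 + s))


open Set

namespace CoareaAux


variable {m : ℕ}

/-- Translation in the first coordinate. -/
def τ (a : ℝ) (x : ℝ × EuclideanSpace ℝ (Fin m)) : ℝ × EuclideanSpace ℝ (Fin m) :=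
  (x.1 + a, x.2)

noncomputable def τe (m : ℕ) (a : ℝ) :
    (ℝ × EuclideanSpace ℝ (Fin m)) ≃ᵐ (ℝ × EuclideanSpace ℝ (Fin m)) :=
  (MeasurableEquiv.addRight a).prodCongr (MeasurableEquiv.refl _)

lemma τe_apply (a : ℝ) (x : ℝ × EuclideanSpace ℝ (Fin m)) : τe m a x = τ a x := rfl

lemma τ_mp (a : ℝ) : MeasurePreserving (τ (m := m) a) volume volume := by
  have h := (measurePreserving_add_right (volume : Measure ℝ) a).prod
    (MeasurePreserving.id (volume : Measure (EuclideanSpace ℝ (Fin m))))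
  rw [← Measure.volume_eq_prod] at h
  exact h

/-- The fundamental strip (with `Ioc` boundary convention). -/
def S (m : ℕ) : Set (ℝ × EuclideanSpace ℝ (Fin m)) := {x | x.1 ∈ Set.Ioc (-π) π}

lemma S_meas : MeasurableSet (S m) := measurable_fst measurableSet_Ioc

lemma lint_decomp (h : ℝ × EuclideanSpace ℝ (Fin m) → ℝ≥0∞) (hm : Measurable h) :
    ∫⁻ y, h y = ∑' k : ℤ, ∫⁻ y in S m, h (τ (k * (2 * π)) y) := by
  have h2π : (0:ℝ) < 2 * π := by positivity
  set A : ℤ → Set (ℝ × EuclideanSpace ℝ (Fin m)) := fun k =>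
    Prod.fst ⁻¹' Set.Ioc (-π + k • (2*π)) (-π + (k+1) • (2*π)) with hA
  have hAm : ∀ k, MeasurableSet (A k) := fun k => measurable_fst measurableSet_Ioc
  have hAd : Pairwise (Function.onFun Disjoint A) := by
    intro i j hij
    exact (Set.pairwise_disjoint_Ioc_add_zsmul (-π) (2*π) hij).preimage _
  have hAu : (⋃ k, A k) = univ := by
    rw [hA, ← Set.preimage_iUnion, iUnion_Ioc_add_zsmul h2π (-π), Set.preimage_univ]
  have step : ∀ k : ℤ, ∫⁻ y in A k, h y = ∫⁻ y in S m, h (τ (k * (2*π)) y) := by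
    intro k
    have hpre : τ (m := m) (k * (2*π)) ⁻¹' A k = S m := by
      ext x
      simp only [hA, Set.mem_preimage, τ, Set.mem_Ioc, S, Set.mem_setOf_eq, zsmul_eq_mul,
        Int.cast_add, Int.cast_one]
      constructor
      · rintro ⟨h1, h2⟩
        constructor <;> nlinarith
      · rintro ⟨h1, h2⟩
        constructor <;> nlinarith
    rw [← hpre, (τ_mp (k * (2*π))).setLIntegral_comp_preimage_emb
      ((τe m (k * (2*π))).measurableEmbedding) h (A k)]
  calc ∫⁻ y, h y = ∫⁻ y in ⋃ k, A k, h y := by rw [hAu, setLIntegral_univ]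
    _ = ∑' k : ℤ, ∫⁻ y in A k, h y := lintegral_iUnion hAm hAd h
    _ = ∑' k : ℤ, ∫⁻ y in S m, h (τ (k * (2*π)) y) := by exact tsum_congr step


lemma τ_meas (a : ℝ) : Measurable (τ (m := m) a) := (τ_mp a).measurable

lemma τ_cancel (k : ℤ) (x : ℝ × EuclideanSpace ℝ (Fin m)) :
    τ ((k : ℝ) * (2 * π)) (τ (((-k : ℤ) : ℝ) * (2 * π)) x) = x := by
  simp only [τ]
  ext : 1
  · push_cast; ring
  · rfl

lemma swap_strip (f : (ℝ × EuclideanSpace ℝ (Fin m)) → (ℝ × EuclideanSpace ℝ (Fin m)) → ℝ≥0∞)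
    (hf : Measurable (Function.uncurry f))
    (hper : ∀ (k : ℤ) (x y : ℝ × EuclideanSpace ℝ (Fin m)),
      f (τ ((k : ℝ) * (2 * π)) x) (τ ((k : ℝ) * (2 * π)) y) = f x y) :
    ∫⁻ x in S m, ∫⁻ y, f x y = ∫⁻ y in S m, ∫⁻ x, f x y := by
  have hmix : ∀ (k : ℤ), Measurable (Function.uncurry
      (fun x y => f (τ ((k : ℝ) * (2 * π)) x) y)) := by
    intro k
    exact hf.comp ((τ_meas _).comp measurable_fst |>.prodMk measurable_snd)
  have hmix2 : ∀ (k : ℤ), Measurable (Function.uncurry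
      (fun x y => f x (τ ((k : ℝ) * (2 * π)) y))) := by
    intro k
    exact hf.comp (measurable_fst.prodMk ((τ_meas _).comp measurable_snd))
  have key : ∀ k : ℤ, ∀ x y, f x (τ ((k : ℝ) * (2 * π)) y)
      = f (τ (((-k : ℤ) : ℝ) * (2 * π)) x) y := by
    intro k x y
    conv_rhs => rw [← hper k]
    rw [τ_cancel]
  calc ∫⁻ x in S m, ∫⁻ y, f x y
      = ∫⁻ x in S m, ∑' k : ℤ, ∫⁻ y in S m, f x (τ ((k:ℝ) * (2*π)) y) := by
        refine lintegral_congr fun x => ?_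
        exact lint_decomp (f x) (hf.of_uncurry_left)
    _ = ∑' k : ℤ, ∫⁻ x in S m, ∫⁻ y in S m, f x (τ ((k:ℝ) * (2*π)) y) := by
        refine lintegral_tsum fun k => ?_
        exact ((hmix2 k).lintegral_prod_right).aemeasurable
    _ = ∑' k : ℤ, ∫⁻ x in S m, ∫⁻ y in S m, f (τ (((-k : ℤ):ℝ) * (2*π)) x) y := by
        refine tsum_congr fun k => ?_
        refine lintegral_congr fun x => lintegral_congr fun y => key k x y
    _ = ∑' k : ℤ, ∫⁻ y in S m, ∫⁻ x in S m, f (τ (((-k : ℤ):ℝ) * (2*π)) x) y := by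
        refine tsum_congr fun k => ?_
        exact lintegral_lintegral_swap ((hmix (-k)).aemeasurable)
    _ = ∫⁻ y in S m, ∑' k : ℤ, ∫⁻ x in S m, f (τ (((-k : ℤ):ℝ) * (2*π)) x) y := by
        refine (lintegral_tsum fun k => ?_).symm
        exact ((hmix (-k)).lintegral_prod_left).aemeasurable
    _ = ∫⁻ y in S m, ∑' k : ℤ, ∫⁻ x in S m, f (τ ((k : ℝ) * (2*π)) x) y := by
        refine lintegral_congr fun y => ?_
        exact (Equiv.neg ℤ).tsum_eq (fun k => ∫⁻ x in S m, f (τ ((k : ℝ) * (2*π)) x) y)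
    _ = ∫⁻ y in S m, ∫⁻ x, f x y := by
        refine lintegral_congr fun y => ?_
        exact (lint_decomp (fun x => f x y) (hf.of_uncurry_right)).symm


/-- The kernel. -/
noncomputable def K (m : ℕ) (s : ℝ) (x y : ℝ × EuclideanSpace ℝ (Fin m)) : ℝ≥0∞ :=
  ENNReal.ofReal (1 / Real.sqrt ((x.1 - y.1) ^ 2 + ‖x.2 - y.2‖ ^ 2) ^ ((m : ℝ) + 1 + s))

lemma K_meas (s : ℝ) (hs : 0 ≤ (m : ℝ) + 1 + s) :
    Measurable (fun p : (ℝ × EuclideanSpace ℝ (Fin m)) × (ℝ × EuclideanSpace ℝ (Fin m)) =>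
      K m s p.1 p.2) := by
  apply Measurable.ennreal_ofReal
  apply Measurable.const_div
  exact (Real.continuous_rpow_const hs).measurable.comp
    ((((measurable_fst.fst.sub measurable_snd.fst).pow_const 2).add
      ((measurable_fst.snd.sub measurable_snd.snd).norm.pow_const 2)).sqrt)

lemma K_symm (s : ℝ) (x y : ℝ × EuclideanSpace ℝ (Fin m)) : K m s x y = K m s y x := by
  unfold K
  rw [show (x.1 - y.1) ^ 2 = (y.1 - x.1) ^ 2 by ring, norm_sub_rev]

lemma K_tr (s a : ℝ) (x y : ℝ × EuclideanSpace ℝ (Fin m)) :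
    K m s (τ a x) (τ a y) = K m s x y := by
  unfold K τ
  norm_num

/-- The `Ioo`-strip used in the problem statement. -/
def Soo (m : ℕ) : Set (ℝ × EuclideanSpace ℝ (Fin m)) := {x | x.1 ∈ Set.Ioo (-π) π}

lemma Soo_ae_eq : (Soo m : Set (ℝ × EuclideanSpace ℝ (Fin m))) =ᵐ[volume] S m := by
  rw [MeasureTheory.ae_eq_set]
  constructor
  · have : (Soo m) \ (S m) = ∅ := by
      apply Set.diff_eq_empty.2
      intro x hx
      exact ⟨hx.1, hx.2.le⟩
    simp [this]
  · apply measure_mono_null (t := (Prod.fst ⁻¹' ({π} : Set ℝ) : Set (ℝ × EuclideanSpace ℝ (Fin m))))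
    · intro x hx
      have h1 : x.1 ∈ Set.Ioc (-π) π := hx.1
      have h2 : x.1 ∉ Set.Ioo (-π) π := hx.2
      simp only [Set.mem_preimage, Set.mem_singleton_iff]
      rcases eq_or_lt_of_le h1.2 with h | h
      · exact h
      · exact absurd ⟨h1.1, h⟩ h2
    · have heq : (Prod.fst ⁻¹' ({π} : Set ℝ) : Set (ℝ × EuclideanSpace ℝ (Fin m)))
          = ({π} : Set ℝ) ×ˢ (Set.univ : Set (EuclideanSpace ℝ (Fin m))) := by
        ext x
        exact ⟨fun hx => ⟨hx, Set.mem_univ _⟩, fun hx => hx.1⟩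
      rw [heq, Measure.volume_eq_prod, Measure.prod_prod]
      simp

lemma restrict_Soo : (volume.restrict (Soo m) : Measure (ℝ × EuclideanSpace ℝ (Fin m)))
    = volume.restrict (S m) := Measure.restrict_congr_set Soo_ae_eq


lemma ofReal_abs_sub (a b : ℝ) :
    ENNReal.ofReal |a - b| = ENNReal.ofReal (a - b) + ENNReal.ofReal (b - a) := by
  rcases le_total b a with h | h
  · rw [abs_of_nonneg (by linarith : (0:ℝ) ≤ a - b),
      ENNReal.ofReal_of_nonpos (by linarith : b - a ≤ 0), add_zero]
  · rw [abs_of_nonpos (by linarith : a - b ≤ 0),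
      ENNReal.ofReal_of_nonpos (by linarith : a - b ≤ 0), zero_add, neg_sub]

lemma slice (c : ℝ≥0∞) (a b : ℝ) :
    ∫⁻ t : ℝ, ((Set.Ico b a).indicator (fun _ => c) t + (Set.Ico a b).indicator (fun _ => c) t)
      = ENNReal.ofReal |a - b| * c := by
  rw [lintegral_add_left (measurable_const.indicator measurableSet_Ico),
    lintegral_indicator_const measurableSet_Ico, lintegral_indicator_const measurableSet_Ico,
    Real.volume_Ico, Real.volume_Ico, ofReal_abs_sub, add_mul, mul_comm c, mul_comm c]

/-- The function whose `t`-integral recovers the Gagliardo integrand. -/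
noncomputable def g (m : ℕ) (s : ℝ) (u : ℝ × EuclideanSpace ℝ (Fin m) → ℝ)
    (x y : ℝ × EuclideanSpace ℝ (Fin m)) (t : ℝ) : ℝ≥0∞ :=
  (Set.Ico (u y) (u x)).indicator (fun _ => K m s x y) t +
    (Set.Ico (u x) (u y)).indicator (fun _ => K m s x y) t

lemma g_meas (s : ℝ) (hs : 0 ≤ (m : ℝ) + 1 + s) {u : ℝ × EuclideanSpace ℝ (Fin m) → ℝ}
    (hu : Measurable u) :
    Measurable (fun p : ((ℝ × EuclideanSpace ℝ (Fin m)) × (ℝ × EuclideanSpace ℝ (Fin m))) × ℝ =>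
      g m s u p.1.1 p.1.2 p.2) := by
  have hK : Measurable (fun p : ((ℝ × EuclideanSpace ℝ (Fin m)) ×
      (ℝ × EuclideanSpace ℝ (Fin m))) × ℝ => K m s p.1.1 p.1.2) :=
    (K_meas s hs).comp measurable_fst
  have h1 : Measurable (fun p : ((ℝ × EuclideanSpace ℝ (Fin m)) ×
      (ℝ × EuclideanSpace ℝ (Fin m))) × ℝ =>
      (Set.Ico (u p.1.2) (u p.1.1)).indicator (fun _ => K m s p.1.1 p.1.2) p.2) := by
    have : (fun p : ((ℝ × EuclideanSpace ℝ (Fin m)) ×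
        (ℝ × EuclideanSpace ℝ (Fin m))) × ℝ =>
        (Set.Ico (u p.1.2) (u p.1.1)).indicator (fun _ => K m s p.1.1 p.1.2) p.2)
        = {q : ((ℝ × EuclideanSpace ℝ (Fin m)) × (ℝ × EuclideanSpace ℝ (Fin m))) × ℝ |
            u q.1.2 ≤ q.2 ∧ q.2 < u q.1.1}.indicator (fun q => K m s q.1.1 q.1.2) := by
      funext p
      simp only [Set.indicator_apply, Set.mem_Ico, Set.mem_setOf_eq]
    rw [this]
    exact hK.indicator ((measurableSet_le (hu.comp measurable_fst.snd) measurable_snd).inter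
      (measurableSet_lt measurable_snd (hu.comp measurable_fst.fst)))
  have h2 : Measurable (fun p : ((ℝ × EuclideanSpace ℝ (Fin m)) ×
      (ℝ × EuclideanSpace ℝ (Fin m))) × ℝ =>
      (Set.Ico (u p.1.1) (u p.1.2)).indicator (fun _ => K m s p.1.1 p.1.2) p.2) := by
    have : (fun p : ((ℝ × EuclideanSpace ℝ (Fin m)) ×
        (ℝ × EuclideanSpace ℝ (Fin m))) × ℝ =>
        (Set.Ico (u p.1.1) (u p.1.2)).indicator (fun _ => K m s p.1.1 p.1.2) p.2)
        = {q : ((ℝ × EuclideanSpace ℝ (Fin m)) × (ℝ × EuclideanSpace ℝ (Fin m))) × ℝ |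
            u q.1.1 ≤ q.2 ∧ q.2 < u q.1.2}.indicator (fun q => K m s q.1.1 q.1.2) := by
      funext p
      simp only [Set.indicator_apply, Set.mem_Ico, Set.mem_setOf_eq]
    rw [this]
    exact hK.indicator ((measurableSet_le (hu.comp measurable_fst.fst) measurable_snd).inter
      (measurableSet_lt measurable_snd (hu.comp measurable_fst.snd)))
  exact h1.add h2


lemma main_slice (s t : ℝ) (hs : 0 ≤ (m : ℝ) + 1 + s)
    {u : ℝ × EuclideanSpace ℝ (Fin m) → ℝ} (hu : Measurable u)
    (hper : ∀ (k : ℤ) (x : ℝ × EuclideanSpace ℝ (Fin m)), u (τ ((k : ℝ) * (2 * π)) x) = u x) :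
    ∫⁻ x in S m, ∫⁻ y, g m s u x y t = 2 * perPerim m s {x | t < u x} := by
  set A : Set (ℝ × EuclideanSpace ℝ (Fin m)) := {x | t < u x} with hAdef
  have hA : MeasurableSet A := measurableSet_lt measurable_const hu
  set f₁ : (ℝ × EuclideanSpace ℝ (Fin m)) → (ℝ × EuclideanSpace ℝ (Fin m)) → ℝ≥0∞ :=
    fun x y => if u y ≤ t ∧ t < u x then K m s x y else 0 with hf₁def
  set f₂ : (ℝ × EuclideanSpace ℝ (Fin m)) → (ℝ × EuclideanSpace ℝ (Fin m)) → ℝ≥0∞ :=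
    fun x y => if u x ≤ t ∧ t < u y then K m s x y else 0 with hf₂def
  have hg : ∀ x y, g m s u x y t = f₁ x y + f₂ x y := by
    intro x y
    simp only [g, Set.indicator_apply, Set.mem_Ico, hf₁def, hf₂def]
  have hf₁ : Measurable (Function.uncurry f₁) := by
    refine Measurable.ite ?_ (K_meas s hs) measurable_const
    exact (measurableSet_le (hu.comp measurable_snd) measurable_const).inter
      (measurableSet_lt measurable_const (hu.comp measurable_fst))
  have hf₂ : Measurable (Function.uncurry f₂) := by
    refine Measurable.ite ?_ (K_meas s hs) measurable_const
    exact (measurableSet_le (hu.comp measurable_fst) measurable_const).inter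
      (measurableSet_lt measurable_const (hu.comp measurable_snd))
  have inner1 : ∀ x, ∫⁻ y, f₁ x y = A.indicator (fun x' => ∫⁻ y in Aᶜ, K m s x' y) x := by
    intro x
    by_cases hx : t < u x
    · rw [Set.indicator_of_mem (show x ∈ A from hx)]
      have hfy : ∀ y, f₁ x y = Aᶜ.indicator (fun y => K m s x y) y := by
        intro y
        by_cases hy : u y ≤ t
        · rw [Set.indicator_of_mem (by simpa [hAdef, not_lt] using hy)]
          simp [hf₁def, hy, hx]
        · rw [Set.indicator_of_notMem (by simpa [hAdef, not_lt] using hy)]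
          simp [hf₁def, hy]
      rw [lintegral_congr hfy, lintegral_indicator hA.compl]
    · rw [Set.indicator_of_notMem (show x ∉ A from hx)]
      have hfy : ∀ y, f₁ x y = 0 := fun y => by simp [hf₁def, hx]
      simp [lintegral_congr hfy]
  have hrestr : volume.restrict (A ∩ Soo m) = volume.restrict (A ∩ S m) := by
    rw [← Measure.restrict_restrict hA, ← Measure.restrict_restrict hA, restrict_Soo]
  have term1 : ∫⁻ x in S m, ∫⁻ y, f₁ x y = perPerim m s A := by
    rw [lintegral_congr inner1, lintegral_indicator hA, Measure.restrict_restrict hA, perPerim,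
      show {x : ℝ × EuclideanSpace ℝ (Fin m) | x.1 ∈ Set.Ioo (-π) π} = Soo m from rfl, hrestr]
    rfl
  have per₂ : ∀ (k : ℤ) (x y : ℝ × EuclideanSpace ℝ (Fin m)),
      f₂ (τ ((k : ℝ) * (2 * π)) x) (τ ((k : ℝ) * (2 * π)) y) = f₂ x y := by
    intro k x y
    simp only [hf₂def, hper k, K_tr]
  have sym : ∀ x y, f₂ x y = f₁ y x := by
    intro x y
    show (if u x ≤ t ∧ t < u y then K m s x y else 0) = (if u x ≤ t ∧ t < u y then K m s y x else 0)
    rw [K_symm s x y]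
  have term2 : ∫⁻ x in S m, ∫⁻ y, f₂ x y = perPerim m s A := by
    rw [swap_strip f₂ hf₂ per₂]
    calc ∫⁻ y in S m, ∫⁻ x, f₂ x y = ∫⁻ y in S m, ∫⁻ x, f₁ y x := by
          exact lintegral_congr fun y => lintegral_congr fun x => sym x y
      _ = perPerim m s A := term1
  calc ∫⁻ x in S m, ∫⁻ y, g m s u x y t
      = ∫⁻ x in S m, ∫⁻ y, (f₁ x y + f₂ x y) := by
        exact lintegral_congr fun x => lintegral_congr fun y => hg x y
    _ = ∫⁻ x in S m, ((∫⁻ y, f₁ x y) + ∫⁻ y, f₂ x y) := by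
        exact lintegral_congr fun x => lintegral_add_left (hf₁.of_uncurry_left) _
    _ = (∫⁻ x in S m, ∫⁻ y, f₁ x y) + ∫⁻ x in S m, ∫⁻ y, f₂ x y := by
        exact lintegral_add_left (hf₁.lintegral_prod_right) _
    _ = 2 * perPerim m s A := by rw [term1, term2, two_mul]

end CoareaAux

theorem stmt_16 (m : ℕ) (s : ℝ) (hs0 : 0 < s) (hs1 : s < 1)
    (u : ℝ × EuclideanSpace ℝ (Fin m) → ℝ) (hu : Measurable u)
    (huper : ∀ x : ℝ × EuclideanSpace ℝ (Fin m), u (x.1 + 2 * π, x.2) = u x) :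
    gagP m s 1 u = 2 * ∫⁻ t : ℝ, perPerim m s {x | t < u x} := by
  have hsK : 0 ≤ (m : ℝ) + 1 + s := by positivity
  have hper : ∀ (k : ℤ) (x : ℝ × EuclideanSpace ℝ (Fin m)),
      u (CoareaAux.τ ((k : ℝ) * (2 * π)) x) = u x := by
    intro k x
    have hp : Function.Periodic (fun a => u (a, x.2)) (2 * π) := fun a => huper (a, x.2)
    have h2 := (hp.int_mul k) x.1
    simpa [CoareaAux.τ] using h2
  have hgmeas := CoareaAux.g_meas (m := m) s hsK hu
  have step1 : gagP m s 1 u = ∫⁻ x in CoareaAux.S m, ∫⁻ y,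
      ENNReal.ofReal |u x - u y| * CoareaAux.K m s x y := by
    rw [gagP, show {x : ℝ × EuclideanSpace ℝ (Fin m) | x.1 ∈ Set.Ioo (-π) π}
      = CoareaAux.Soo m from rfl, CoareaAux.restrict_Soo]
    refine lintegral_congr fun x => lintegral_congr fun y => ?_
    rw [Real.rpow_one, mul_one, div_eq_mul_one_div, ENNReal.ofReal_mul (abs_nonneg _)]
    rfl
  have step2 : ∀ x, ∫⁻ y, ENNReal.ofReal |u x - u y| * CoareaAux.K m s x y
      = ∫⁻ t, ∫⁻ y, CoareaAux.g m s u x y t := by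
    intro x
    have h1 : ∀ y, ENNReal.ofReal |u x - u y| * CoareaAux.K m s x y
        = ∫⁻ t, CoareaAux.g m s u x y t :=
      fun y => (CoareaAux.slice (CoareaAux.K m s x y) (u x) (u y)).symm
    rw [lintegral_congr h1]
    refine lintegral_lintegral_swap ?_
    exact (hgmeas.comp
      ((measurable_const.prodMk measurable_fst).prodMk measurable_snd)).aemeasurable
  have step3 : gagP m s 1 u = ∫⁻ t, ∫⁻ x in CoareaAux.S m, ∫⁻ y,
      CoareaAux.g m s u x y t := by
    rw [step1, lintegral_congr step2]
    refine lintegral_lintegral_swap ?_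
    have hm2 : Measurable (fun q : ((ℝ × EuclideanSpace ℝ (Fin m)) × ℝ) ×
        (ℝ × EuclideanSpace ℝ (Fin m)) => CoareaAux.g m s u q.1.1 q.2 q.1.2) :=
      hgmeas.comp ((measurable_fst.fst.prodMk measurable_snd).prodMk measurable_fst.snd)
    exact (hm2.lintegral_prod_right').aemeasurable
  rw [step3, lintegral_congr (fun t => CoareaAux.main_slice s t hsK hu hper),
    lintegral_const_mul' 2 _ (by norm_num)]
end
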